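/- arXiv:2001.00969 — 6 statements merged into one kernel-verified Lean document; each statement's English description precedes it below -/
import Mathlib

section
/- Let R be an associative unital ℂ-algebra and let A₁, …, Aₙ be unital ℂ-subalgebras of R whose union generates R as a ℂ-algebra. Assume that for all indices 1 ≤ i < j ≤ n and all x ∈ Aⱼ, y ∈ Aᵢ, the product x * y lies in the ℂ-linear span of the set { y' * x' : y' ∈ Aᵢ, x' ∈ Aⱼ }. Then R is equal to the ℂ-linear span of the set of ordered products { x₁ * x₂ * ⋯ * xₙ : xᵢ ∈ Aᵢ for each i }. -/
/-!
Work in the semiring of `ℂ`-submodules of `R`, where the span of the ordered products is the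
product `P = A₀ A₁ ⋯ Aₙ₋₁` of the subalgebras viewed as submodules. Each `Aᵢ` is idempotent
and the exchange hypothesis reads `Aⱼ Aᵢ ≤ Aᵢ Aⱼ` for `i < j`, so in `P Aⱼ` the factor `Aⱼ`
moves left past the later factors until it is absorbed by its own copy: `P Aⱼ ≤ P`.
Hence `P P ≤ P`, and as `1 ∈ P`, `P` is a subalgebra containing every `Aᵢ`, i.e. all of `R`.
-/

open scoped Pointwise

namespace List

variable {S : Type*} [Monoid S] [Preorder S] [MulRightMono S]

theorem prod_mul_le_mul_prod_of_forall_mul_le [MulLeftMono S] {l : List S} {a : S}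
    (h : ∀ b ∈ l, b * a ≤ a * b) : l.prod * a ≤ a * l.prod := by
  induction l with
  | nil => simp
  | cons b l ih =>
    simp only [forall_mem_cons] at h
    calc (b :: l).prod * a = b * (l.prod * a) := by rw [prod_cons, mul_assoc]
      _ ≤ b * (a * l.prod) := mul_le_mul_right (ih h.2) b
      _ = b * a * l.prod := (mul_assoc ..).symm
      _ ≤ a * b * l.prod := mul_le_mul_left h.1 _
      _ = a * (b :: l).prod := by rw [prod_cons, mul_assoc]

theorem prod_mul_le_prod_of_pairwise [MulLeftMono S] {l : List S} (hidem : ∀ a ∈ l, a * a ≤ a)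
    (hexch : l.Pairwise fun a b => b * a ≤ a * b) : ∀ a ∈ l, l.prod * a ≤ l.prod := by
  induction l with
  | nil => simp
  | cons b l ih =>
    simp only [forall_mem_cons, pairwise_cons] at hidem hexch ⊢
    refine ⟨?_, fun a ha => ?_⟩
    · calc (b :: l).prod * b = b * (l.prod * b) := by rw [prod_cons, mul_assoc]
        _ ≤ b * (b * l.prod) := mul_le_mul_right (prod_mul_le_mul_prod_of_forall_mul_le hexch.1) b
        _ = b * b * l.prod := (mul_assoc ..).symm
        _ ≤ (b :: l).prod := mul_le_mul_left hidem.1 _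
    · rw [prod_cons, mul_assoc]
      exact mul_le_mul_right (ih hidem.2 hexch.2 a ha) b

theorem mul_prod_le_of_forall_mul_le {x : S} {l : List S} (h : ∀ a ∈ l, x * a ≤ x) :
    x * l.prod ≤ x := by
  induction l with
  | nil => simp
  | cons a l ih =>
    simp only [forall_mem_cons] at h
    calc x * (a :: l).prod = x * a * l.prod := by rw [prod_cons, mul_assoc]
      _ ≤ x * l.prod := mul_le_mul_left h.1 _
      _ ≤ x := ih h.2

theorem prod_mul_prod_le_of_pairwise [MulLeftMono S] {l : List S} (hidem : ∀ a ∈ l, a * a ≤ a)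
    (hexch : l.Pairwise fun a b => b * a ≤ a * b) : l.prod * l.prod ≤ l.prod :=
  mul_prod_le_of_forall_mul_le (prod_mul_le_prod_of_pairwise hidem hexch)

end List

namespace Submodule

variable {K R : Type*} [CommSemiring K] [Semiring R] [Algebra K R]

theorem span_list_prod (l : List (Set R)) : span K l.prod = (l.map (span K)).prod := by
  induction l with
  | nil => rw [List.prod_nil, List.map_nil, List.prod_nil, one_eq_span_one_set]
  | cons s l ih => rw [List.prod_cons, List.map_cons, List.prod_cons, ← ih, span_mul_span]

end Submodule

namespace Subalgebra

variable {K R : Type*} [CommSemiring K] [Semiring R] [Algebra K R] {n : ℕ}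

theorem span_ofFn_prod_eq_prod_toSubmodule (A : Fin n → Subalgebra K R) :
    Submodule.span K
        {z : R | ∃ x : Fin n → R, (∀ i, x i ∈ A i) ∧ z = (List.ofFn x).prod} =
      (List.ofFn fun i => toSubmodule (A i)).prod := by
  have hset : {z : R | ∃ x : Fin n → R, (∀ i, x i ∈ A i) ∧ z = (List.ofFn x).prod} =
      (List.ofFn fun i => (A i : Set R)).prod := by
    ext z
    rw [Set.mem_prod_list_ofFn]
    constructor
    · rintro ⟨x, hx, rfl⟩
      exact ⟨fun i => ⟨x i, hx i⟩, rfl⟩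
    · rintro ⟨x, rfl⟩
      exact ⟨fun i => x i, fun i => (x i).2, rfl⟩
  rw [hset, Submodule.span_list_prod, List.map_ofFn]
  exact congrArg List.prod <| List.ofFn_inj.mpr <| funext fun i =>
    Submodule.span_eq (toSubmodule (A i))

theorem prod_ofFn_toSubmodule_eq_top (A : Fin n → Subalgebra K R)
    (hgen : Algebra.adjoin K (⋃ i, (A i : Set R)) = ⊤)
    (hexch : ∀ i j, i < j →
      toSubmodule (A j) * toSubmodule (A i) ≤ toSubmodule (A i) * toSubmodule (A j)) :
    (List.ofFn fun i => toSubmodule (A i)).prod = ⊤ := by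
  set P := (List.ofFn fun i => toSubmodule (A i)).prod
  have hidem : ∀ M ∈ List.ofFn fun i => toSubmodule (A i), M * M ≤ M := by
    simp only [List.mem_ofFn, forall_exists_index]
    rintro _ i rfl
    exact (isIdempotentElem_toSubmodule (A i)).le
  have hpair := (List.pairwise_ofFn (R := fun M N : Submodule K R => N * M ≤ M * N)).mpr hexch
  have hone : (1 : R) ∈ P :=
    Submodule.one_le.mp <| List.one_le_prod_of_one_le <| by
      simp only [List.mem_ofFn, forall_exists_index]
      rintro _ i rfl
      exact Submodule.one_le.mpr (one_mem (A i))
  have hA : ∀ i, toSubmodule (A i) ≤ P := fun i =>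
    calc toSubmodule (A i) ≤ P * toSubmodule (A i) :=
          le_mul_of_one_le_left' (Submodule.one_le.mpr hone)
      _ ≤ P := List.prod_mul_le_prod_of_pairwise hidem hpair _ (List.mem_ofFn.mpr ⟨i, rfl⟩)
  have hmul : ∀ x y, x ∈ P → y ∈ P → x * y ∈ P := fun _ _ hx hy =>
    List.prod_mul_prod_le_of_pairwise hidem hpair (Submodule.mul_mem_mul hx hy)
  have hB : ⊤ ≤ P.toSubalgebra hone hmul := hgen ▸ Algebra.adjoin_le (Set.iUnion_subset hA)
  rw [← P.toSubalgebra_toSubmodule hone hmul, top_le_iff.mp hB, Algebra.top_toSubmodule]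

end Subalgebra

/-- Let `R` be an associative unital `ℂ`-algebra and `A 0, …, A (n-1)` unital
`ℂ`-subalgebras whose union generates `R` as a `ℂ`-algebra.  Assume that for `i < j`, any
product `x * y` with `x ∈ A j`, `y ∈ A i` lies in the `ℂ`-linear span of the products
`y' * x'` with `y' ∈ A i`, `x' ∈ A j`.  Then `R` is the `ℂ`-linear span of the ordered
products `x 0 * x 1 * ⋯ * x (n-1)` with `x i ∈ A i`. -/
theorem stated_skein_straightening
    {R : Type*} [Ring R] [Algebra ℂ R] (n : ℕ) (A : Fin n → Subalgebra ℂ R)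
    (hgen : Algebra.adjoin ℂ (⋃ i, (A i : Set R)) = ⊤)
    (hexch : ∀ i j : Fin n, i < j → ∀ x ∈ A j, ∀ y ∈ A i,
      x * y ∈ Submodule.span ℂ {z : R | ∃ y' ∈ A i, ∃ x' ∈ A j, z = y' * x'}) :
    Submodule.span ℂ
      {z : R | ∃ x : Fin n → R, (∀ i, x i ∈ A i) ∧ z = (List.ofFn x).prod} = ⊤ := by
  rw [Subalgebra.span_ofFn_prod_eq_prod_toSubmodule]
  refine Subalgebra.prod_ofFn_toSubmodule_eq_top A hgen fun i j hij => Submodule.mul_le.mpr ?_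
  intro x hx y hy
  rw [Submodule.mul_eq_span_mul_set]
  refine Submodule.span_mono ?_ (hexch i j hij x hx y hy)
  rintro _ ⟨y', hy', x', hx', rfl⟩
  exact Set.mul_mem_mul hy' hx'
end

section
/- The algebra A_q is spanned as a ℂ-vector space by the images of the monomials { aⁱ * bʲ * dᵏ : i, j, k ∈ ℕ } together with the images of the monomials { aⁱ * cʲ * dᵏ : i, j, k ∈ ℕ }. -/
noncomputable section

/-- The generator `a` of the free algebra on four generators. -/
def genA : FreeAlgebra ℂ (Fin 4) := FreeAlgebra.ι ℂ 0
/-- The generator `b`. -/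
def genB : FreeAlgebra ℂ (Fin 4) := FreeAlgebra.ι ℂ 1
/-- The generator `c`. -/
def genC : FreeAlgebra ℂ (Fin 4) := FreeAlgebra.ι ℂ 2
/-- The generator `d`. -/
def genD : FreeAlgebra ℂ (Fin 4) := FreeAlgebra.ι ℂ 3

/-- The defining relations of the quantized coordinate ring `ℂ_q[SL₂]`:
quotienting by this relation amounts to quotienting by the two-sided ideal generated by the
seven elements `a*b − q⁻¹•(b*a)`, `a*c − q⁻¹•(c*a)`, `d*b − q•(b*d)`, `d*c − q•(c*d)`,
`c*b − b*c`, `a*d − 1 − q⁻¹•(b*c)`, `d*a − 1 − q•(b*c)`. -/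
inductive SL2Rel (q : ℂ) : FreeAlgebra ℂ (Fin 4) → FreeAlgebra ℂ (Fin 4) → Prop
  | ab : SL2Rel q (genA * genB) (q⁻¹ • (genB * genA))
  | ac : SL2Rel q (genA * genC) (q⁻¹ • (genC * genA))
  | db : SL2Rel q (genD * genB) (q • (genB * genD))
  | dc : SL2Rel q (genD * genC) (q • (genC * genD))
  | cb : SL2Rel q (genC * genB) (genB * genC)
  | ad : SL2Rel q (genA * genD) (1 + q⁻¹ • (genB * genC))
  | da : SL2Rel q (genD * genA) (1 + q • (genB * genC))

/-- The quantized coordinate ring `A_q = ℂ_q[SL₂]`. -/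
def Aq (q : ℂ) := RingQuot (SL2Rel q)

instance (q : ℂ) : Ring (Aq q) := inferInstanceAs (Ring (RingQuot (SL2Rel q)))
instance (q : ℂ) : Algebra ℂ (Aq q) := inferInstanceAs (Algebra ℂ (RingQuot (SL2Rel q)))

/-- The canonical projection onto the quotient. -/
def projAq (q : ℂ) : FreeAlgebra ℂ (Fin 4) →ₐ[ℂ] Aq q := RingQuot.mkAlgHom ℂ (SL2Rel q)

/-! The span of the monomials `aⁱbʲdᵏ` and `aⁱcʲdᵏ` contains `1`, so it is the whole algebra as
soon as it is stable under left multiplication by the generators. Moving `b` or `c` past `aⁱ` only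
costs a power of `q`; the one new kind of term, `c bʲ⁺¹ = (bc) bʲ`, is reduced with
`bc = q ad - q` and `d bʲ = qʲ bʲ d`, and `d aⁱ⁺¹ = aⁱ + q²ⁱ⁺¹ aⁱbc` brings multiplication by `d`
back to that case. The relations are symmetric under `b ↔ c`, which exchanges the two families. -/

theorem mul_pow_eq_smul_pow_mul {R A : Type*} [CommSemiring R] [Semiring A] [Algebra R A]
    {r : R} {x y : A} (h : x * y = r • (y * x)) (n : ℕ) :
    x * y ^ n = r ^ n • (y ^ n * x) := by
  induction n with
  | zero => simp
  | succ n ih =>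
    rw [pow_succ, ← mul_assoc, ih, smul_mul_assoc, mul_assoc, h, mul_smul_comm, smul_smul,
      ← mul_assoc, ← pow_succ, ← pow_succ]

theorem Submodule.mul_mem_span_of_forall_mul_mem {R A : Type*} [CommSemiring R] [Semiring A]
    [Algebra R A] {s : Set A} {x : A} (h : ∀ t ∈ s, x * t ∈ span R s) {m : A}
    (hm : m ∈ span R s) : x * m ∈ span R s :=
  (span_le (p := (span R s).comap (LinearMap.mulLeft R x))).mpr h hm

theorem Submodule.eq_top_of_one_mem_of_mul_mem {R A : Type*} [CommSemiring R] [Semiring A]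
    [Algebra R A] {s : Set A} (hs : Algebra.adjoin R s = ⊤) {M : Submodule R A} (h1 : 1 ∈ M)
    (hmul : ∀ x ∈ s, ∀ m ∈ M, x * m ∈ M) : M = ⊤ := by
  rw [eq_top_iff]
  rintro y -
  have hy : y ∈ Algebra.adjoin R s := hs ▸ Algebra.mem_top
  suffices ∀ m ∈ M, y * m ∈ M by simpa using this 1 h1
  induction hy using Algebra.adjoin_induction with
  | mem x hx => exact hmul x hx
  | algebraMap r => exact fun m hm ↦ by simpa [← Algebra.smul_def] using M.smul_mem r hm
  | add x y _ _ hx hy => exact fun m hm ↦ by simpa [add_mul] using M.add_mem (hx m hm) (hy m hm)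
  | mul x y _ _ hx hy => exact fun m hm ↦ by simpa [mul_assoc] using hx _ (hy m hm)

section SL2Relations

variable {K A : Type*} [Field K] [Ring A] [Algebra K A]

structure IsSL2Quadruple (q : K) (a b c d : A) : Prop where
  a_mul_b : a * b = q⁻¹ • (b * a)
  a_mul_c : a * c = q⁻¹ • (c * a)
  d_mul_b : d * b = q • (b * d)
  d_mul_c : d * c = q • (c * d)
  c_mul_b : c * b = b * c
  a_mul_d : a * d = 1 + q⁻¹ • (b * c)
  d_mul_a : d * a = 1 + q • (b * c)

def pbwMonomials (a x d : A) : Set A := {m | ∃ i j k : ℕ, m = a ^ i * x ^ j * d ^ k}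

variable (K) in
def pbwSpan (a b c d : A) : Submodule K A :=
  Submodule.span K (pbwMonomials a b d ∪ pbwMonomials a c d)

variable {q : K} {a b c d : A}

theorem pbwSpan_swap : pbwSpan K a c b d = pbwSpan K a b c d := by
  rw [pbwSpan, pbwSpan, Set.union_comm]

theorem monomial_mem_pbwSpan_left (i j k : ℕ) : a ^ i * b ^ j * d ^ k ∈ pbwSpan K a b c d :=
  Submodule.subset_span (Or.inl ⟨i, j, k, rfl⟩)

theorem monomial_mem_pbwSpan_right (i j k : ℕ) : a ^ i * c ^ j * d ^ k ∈ pbwSpan K a b c d :=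
  Submodule.subset_span (Or.inr ⟨i, j, k, rfl⟩)

namespace IsSL2Quadruple

variable (h : IsSL2Quadruple q a b c d)
include h

theorem swap : IsSL2Quadruple q a c b d where
  a_mul_b := h.a_mul_c
  a_mul_c := h.a_mul_b
  d_mul_b := h.d_mul_c
  d_mul_c := h.d_mul_b
  c_mul_b := h.c_mul_b.symm
  a_mul_d := h.c_mul_b ▸ h.a_mul_d
  d_mul_a := h.c_mul_b ▸ h.d_mul_a

variable (hq : q ≠ 0)
include hq

theorem b_mul_a : b * a = q • (a * b) := by
  rw [h.a_mul_b, smul_smul, mul_inv_cancel₀ hq, one_smul]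

theorem b_mul_c : b * c = q • (a * d) - q • 1 := by
  rw [h.a_mul_d, smul_add, smul_smul, mul_inv_cancel₀ hq, one_smul, add_sub_cancel_left]

theorem b_mul_c_mul_pow (n : ℕ) : b * c * b ^ n = q ^ (n + 1) • (a * b ^ n * d) - q • b ^ n := by
  rw [h.b_mul_c hq, sub_mul, smul_mul_assoc, smul_mul_assoc, one_mul, mul_assoc,
    mul_pow_eq_smul_pow_mul h.d_mul_b, mul_smul_comm, smul_smul, ← mul_assoc, ← pow_succ']

theorem pow_mul_b_mul_c_mul_pow_mem (i n k : ℕ) :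
    a ^ i * (b * c * b ^ n) * d ^ k ∈ pbwSpan K a b c d := by
  have hmon : a ^ i * (a * b ^ n * d) * d ^ k = a ^ (i + 1) * b ^ n * d ^ (k + 1) := by
    rw [pow_succ, pow_succ']
    simp only [mul_assoc]
  rw [h.b_mul_c_mul_pow hq, mul_sub, sub_mul, mul_smul_comm, smul_mul_assoc, hmon,
    mul_smul_comm, smul_mul_assoc]
  exact sub_mem (Submodule.smul_mem _ _ (monomial_mem_pbwSpan_left _ _ _))
    (Submodule.smul_mem _ _ (monomial_mem_pbwSpan_left _ _ _))

theorem d_mul_pow_succ (n : ℕ) : d * a ^ (n + 1) = a ^ n + q ^ (2 * n + 1) • (a ^ n * b * c) := by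
  rw [pow_succ', ← mul_assoc, h.d_mul_a, add_mul, one_mul, smul_mul_assoc, mul_assoc,
    mul_pow_eq_smul_pow_mul (h.swap.b_mul_a hq), mul_smul_comm, ← mul_assoc,
    mul_pow_eq_smul_pow_mul (h.b_mul_a hq), smul_mul_assoc, smul_smul, smul_smul]
  congr 2
  ring

theorem b_mul_monomial (i j k : ℕ) :
    b * (a ^ i * b ^ j * d ^ k) = q ^ i • (a ^ i * b ^ (j + 1) * d ^ k) := by
  rw [← mul_assoc, ← mul_assoc, mul_pow_eq_smul_pow_mul (h.b_mul_a hq), smul_mul_assoc,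
    smul_mul_assoc, mul_assoc (a ^ i), ← pow_succ']

theorem c_mul_monomial_mem (i j k : ℕ) : c * (a ^ i * b ^ j * d ^ k) ∈ pbwSpan K a b c d := by
  rw [← mul_assoc, ← mul_assoc, mul_pow_eq_smul_pow_mul (h.swap.b_mul_a hq), smul_mul_assoc,
    smul_mul_assoc]
  refine Submodule.smul_mem _ _ ?_
  cases j with
  | zero => simpa using monomial_mem_pbwSpan_right i 1 k
  | succ n =>
    rw [pow_succ', mul_assoc (a ^ i) c, ← mul_assoc c, h.c_mul_b]
    exact h.pow_mul_b_mul_c_mul_pow_mem hq i n k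

theorem d_mul_monomial_mem (i j k : ℕ) : d * (a ^ i * b ^ j * d ^ k) ∈ pbwSpan K a b c d := by
  cases i with
  | zero =>
    rw [pow_zero, one_mul, ← mul_assoc, mul_pow_eq_smul_pow_mul h.d_mul_b, smul_mul_assoc,
      mul_assoc, ← pow_succ']
    exact Submodule.smul_mem _ _ (by simpa using monomial_mem_pbwSpan_left 0 j (k + 1))
  | succ n =>
    rw [← mul_assoc, ← mul_assoc, h.d_mul_pow_succ hq, add_mul, add_mul, smul_mul_assoc,
      smul_mul_assoc, mul_assoc (a ^ n) b c, mul_assoc (a ^ n) (b * c)]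
    exact add_mem (monomial_mem_pbwSpan_left n j k)
      (Submodule.smul_mem _ _ (h.pow_mul_b_mul_c_mul_pow_mem hq n j k))

theorem mul_mem_pbwSpan_of_mem_pbwMonomials_left {x m : A} (hx : x ∈ ({a, b, c, d} : Set A))
    (hm : m ∈ pbwMonomials a b d) : x * m ∈ pbwSpan K a b c d := by
  obtain ⟨i, j, k, rfl⟩ := hm
  rcases hx with rfl | rfl | rfl | rfl
  · rw [← mul_assoc, ← mul_assoc, ← pow_succ']
    exact monomial_mem_pbwSpan_left _ _ _
  · rw [h.b_mul_monomial hq]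
    exact Submodule.smul_mem _ _ (monomial_mem_pbwSpan_left _ _ _)
  · exact h.c_mul_monomial_mem hq i j k
  · exact h.d_mul_monomial_mem hq i j k

theorem mul_mem_pbwSpan {x m : A} (hx : x ∈ ({a, b, c, d} : Set A)) (hm : m ∈ pbwSpan K a b c d) :
    x * m ∈ pbwSpan K a b c d := by
  refine Submodule.mul_mem_span_of_forall_mul_mem (fun t ht ↦ ?_) hm
  rcases ht with ht | ht
  · exact h.mul_mem_pbwSpan_of_mem_pbwMonomials_left hq hx ht
  · rw [Set.insert_comm b] at hx
    exact pbwSpan_swap.le (h.swap.mul_mem_pbwSpan_of_mem_pbwMonomials_left hq hx ht)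

theorem pbwSpan_eq_top (hgen : Algebra.adjoin K {a, b, c, d} = ⊤) : pbwSpan K a b c d = ⊤ :=
  Submodule.eq_top_of_one_mem_of_mul_mem hgen (by simpa using monomial_mem_pbwSpan_left 0 0 0)
    fun _ hx _ hm ↦ h.mul_mem_pbwSpan hq hx hm

end IsSL2Quadruple

end SL2Relations

theorem isSL2Quadruple_projAq (q : ℂ) :
    IsSL2Quadruple q (projAq q genA) (projAq q genB) (projAq q genC) (projAq q genD) := by
  have rel {x y} (hxy : SL2Rel q x y) : projAq q x = projAq q y := RingQuot.mkAlgHom_rel ℂ hxy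
  exact ⟨by simpa only [map_mul, map_smul] using rel .ab,
    by simpa only [map_mul, map_smul] using rel .ac,
    by simpa only [map_mul, map_smul] using rel .db,
    by simpa only [map_mul, map_smul] using rel .dc,
    by simpa only [map_mul] using rel .cb,
    by simpa only [map_mul, map_smul, map_add, map_one] using rel .ad,
    by simpa only [map_mul, map_smul, map_add, map_one] using rel .da⟩

theorem adjoin_projAq_generators (q : ℂ) :
    Algebra.adjoin ℂ {projAq q genA, projAq q genB, projAq q genC, projAq q genD} = ⊤ := by
  have hgen : {projAq q genA, projAq q genB, projAq q genC, projAq q genD} =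
      projAq q '' Set.range (FreeAlgebra.ι ℂ) := by
    ext x
    simp [Fin.exists_fin_succ, genA, genB, genC, genD, eq_comm]
  rw [hgen, ← AlgHom.map_adjoin, FreeAlgebra.adjoin_range_ι, Algebra.map_top,
    AlgHom.range_eq_top]
  exact RingQuot.mkAlgHom_surjective ℂ (SL2Rel q)

/-- `A_q` is spanned as a `ℂ`-vector space by the images of the monomials
`aⁱ bʲ dᵏ` together with the images of the monomials `aⁱ cʲ dᵏ`. -/
theorem Aq_spanned_by_pbw_monomials (q : ℂ) (hq : q ≠ 0) :
    Submodule.span ℂ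
      ({x : Aq q | ∃ i j k : ℕ, x = projAq q (genA ^ i * genB ^ j * genD ^ k)} ∪
       {x : Aq q | ∃ i j k : ℕ, x = projAq q (genA ^ i * genC ^ j * genD ^ k)}) = ⊤ := by
  simp only [map_mul, map_pow]
  exact (isSL2Quadruple_projAq q).pbwSpan_eq_top hq (adjoin_projAq_generators q)

end
end

section
/- Let N ≥ 1 be a natural number. Then A_q is generated, as a left module over the unital ℂ-subalgebra of A_q generated by aᴺ, bᴺ, cᴺ and dᴺ, by the finite set { aⁱ * bʲ * dᵏ : 0 ≤ i, j, k ≤ N−1 } ∪ { aⁱ * cʲ * dᵏ : 0 ≤ i, j, k ≤ N−1 }; that is, every element of A_q is a finite sum of elements z * s with z in that subalgebra and s in that finite set. -/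
noncomputable section

/-!
Let `M` be the left span of the monomials over the subalgebra `Z` generated by the `N`-th powers.
As `1 ∈ M`, it suffices that `M` is stable under right multiplication by `a, b, c, d`, and by
the involution `b ↔ c` only the monomials `aⁱbʲdᵏ` have to be checked. Using
`da = q²ad + 1 - q²`, `bc = q(ad - 1)` and the `q`-commutation relations, right multiplication
by a generator keeps such a monomial in the span of the `aⁱbʲdᵏ` with `i, j, k ≤ N`. These all
lie in `M`: an exponent `N` of `a` or `b` is moved to the left into `Z`, and so is `dᴺ`, past
`aⁱ` by induction on `i`, using that `M` is already stable under right multiplication by `a`.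
-/

section QCommute

variable {R A : Type*} [CommRing R] [Ring A] [Algebra R A]

theorem pow_mul_eq_smul_mul_pow {x y : A} {t : R} (h : y * x = t • (x * y)) :
    ∀ m : ℕ, y ^ m * x = t ^ m • (x * y ^ m)
  | 0 => by simp
  | m + 1 => by
    rw [pow_succ, mul_assoc, h, mul_smul_comm, ← mul_assoc, pow_mul_eq_smul_mul_pow h m,
      smul_mul_assoc, smul_smul, mul_assoc, ← pow_succ, ← pow_succ']

theorem pow_mul_pow_eq_smul_mul_pow {x y : A} {t : R} (h : y * x = t • (x * y)) (m : ℕ) :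
    ∀ n : ℕ, y ^ m * x ^ n = t ^ (m * n) • (x ^ n * y ^ m)
  | 0 => by simp
  | n + 1 => by
    rw [pow_succ, ← mul_assoc, pow_mul_pow_eq_smul_mul_pow h m n, smul_mul_assoc, mul_assoc,
      pow_mul_eq_smul_mul_pow h m, mul_smul_comm, smul_smul, ← mul_assoc, ← pow_succ,
      ← pow_add, Nat.mul_succ]

/-- For `k = 0` the last term vanishes, so the truncated exponent `k - 1` is harmless. -/
theorem pow_mul_eq_of_mul_sub_one {x y : A} {v : R} (h : x * y - 1 = v • (y * x - 1)) :
    ∀ k : ℕ, x ^ k * y = v ^ k • (y * x ^ k) + (1 - v ^ k) • x ^ (k - 1)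
  | 0 => by simp
  | k + 1 => by
    have h' : x * y = v • (y * x) + (1 - v) • 1 := by
      rw [sub_eq_iff_eq_add.mp h, smul_sub, sub_smul, one_smul]; abel
    rw [pow_succ', mul_assoc, pow_mul_eq_of_mul_sub_one h k]
    rcases k with _ | k
    · simpa using h'
    · rw [mul_add, mul_smul_comm, mul_smul_comm, ← mul_assoc, h', add_mul, smul_mul_assoc,
        smul_mul_assoc, one_mul, mul_assoc, ← pow_succ', ← pow_succ']
      simp only [Nat.add_sub_cancel]
      module

end QCommute

namespace Subalgebra

variable {R A : Type*} [CommRing R] [Ring A] [Algebra R A] (Z : Subalgebra R A) (S : Set A)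

/-- The left `Z`-module spanned by `S`, bundled as an `R`-submodule. -/
def leftSpan : Submodule R A where
  toAddSubmonoid := AddSubmonoid.closure {y | ∃ z ∈ Z, ∃ s ∈ S, y = z * s}
  smul_mem' r y hy := by
    induction hy using AddSubmonoid.closure_induction with
    | mem y hy =>
      obtain ⟨z, hz, s, hs, rfl⟩ := hy
      exact AddSubmonoid.subset_closure ⟨r • z, Z.smul_mem hz r, s, hs, (smul_mul_assoc r z s).symm⟩
    | zero => simp
    | add y y' _ _ hy hy' => simpa [smul_add] using add_mem hy hy'

variable {Z S}

theorem mul_mem_leftSpan {z y : A} (hz : z ∈ Z) (hy : y ∈ Z.leftSpan S) :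
    z * y ∈ Z.leftSpan S := by
  induction hy using AddSubmonoid.closure_induction with
  | mem y hy =>
    obtain ⟨z', hz', s, hs, rfl⟩ := hy
    exact AddSubmonoid.subset_closure ⟨z * z', mul_mem hz hz', s, hs, (mul_assoc z z' s).symm⟩
  | zero => simp
  | add y y' _ _ hy hy' => simpa [mul_add] using add_mem hy hy'

theorem subset_leftSpan : S ⊆ Z.leftSpan S :=
  fun s hs => AddSubmonoid.subset_closure ⟨1, one_mem Z, s, hs, (one_mul s).symm⟩

theorem mul_mem_leftSpan_of_forall {g y : A} (hg : ∀ s ∈ S, s * g ∈ Z.leftSpan S)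
    (hy : y ∈ Z.leftSpan S) : y * g ∈ Z.leftSpan S := by
  induction hy using AddSubmonoid.closure_induction with
  | mem y hy =>
    obtain ⟨z, hz, s, hs, rfl⟩ := hy
    simpa [mul_assoc] using mul_mem_leftSpan hz (hg s hs)
  | zero => simp
  | add y y' _ _ hy hy' => simpa [add_mul] using add_mem hy hy'

theorem map_mem_leftSpan (σ : A →ₐ[R] A) (hZ : Z.map σ ≤ Z) (hS : σ '' S ⊆ S) {y : A}
    (hy : y ∈ Z.leftSpan S) : σ y ∈ Z.leftSpan S := by
  induction hy using AddSubmonoid.closure_induction with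
  | mem y hy =>
    obtain ⟨z, hz, s, hs, rfl⟩ := hy
    rw [map_mul]
    exact mul_mem_leftSpan (hZ ⟨z, hz, rfl⟩) (subset_leftSpan (hS ⟨s, hs, rfl⟩))
  | zero => simp
  | add y y' _ _ hy hy' => simpa using add_mem hy hy'

theorem leftSpan_eq_top {G : Set A} (hG : Algebra.adjoin R G = ⊤) (h1 : (1 : A) ∈ Z.leftSpan S)
    (hGS : ∀ g ∈ G, ∀ s ∈ S, s * g ∈ Z.leftSpan S) : Z.leftSpan S = ⊤ := by
  refine Submodule.eq_top_iff'.mpr fun x => ?_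
  have hx : x ∈ Algebra.adjoin R G := hG ▸ Algebra.mem_top
  suffices ∀ y ∈ Z.leftSpan S, y * x ∈ Z.leftSpan S by simpa using this 1 h1
  induction hx using Algebra.adjoin_induction with
  | mem g hg => exact fun y => mul_mem_leftSpan_of_forall (hGS g hg)
  | algebraMap r =>
    intro y hy
    rw [← Algebra.commutes, ← Algebra.smul_def]
    exact Submodule.smul_mem _ r hy
  | add x x' _ _ hx hx' => exact fun y hy => by simpa [mul_add] using add_mem (hx y hy) (hx' y hy)
  | mul x x' _ _ hx hx' => exact fun y hy => by simpa [mul_assoc] using hx' _ (hx y hy)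

end Subalgebra

namespace Aq

variable (q : ℂ)

def a : Aq q := projAq q genA
def b : Aq q := projAq q genB
def c : Aq q := projAq q genC
def d : Aq q := projAq q genD

theorem projAq_rel {x y : FreeAlgebra ℂ (Fin 4)} (h : SL2Rel q x y) : projAq q x = projAq q y :=
  RingQuot.mkAlgHom_rel ℂ h

theorem a_mul_b : a q * b q = q⁻¹ • (b q * a q) := by
  simpa [a, b] using projAq_rel q SL2Rel.ab
theorem a_mul_c : a q * c q = q⁻¹ • (c q * a q) := by
  simpa [a, c] using projAq_rel q SL2Rel.ac
theorem d_mul_b : d q * b q = q • (b q * d q) := by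
  simpa [b, d] using projAq_rel q SL2Rel.db
theorem d_mul_c : d q * c q = q • (c q * d q) := by
  simpa [c, d] using projAq_rel q SL2Rel.dc
theorem c_mul_b : c q * b q = b q * c q := by
  simpa [b, c] using projAq_rel q SL2Rel.cb
theorem a_mul_d : a q * d q = 1 + q⁻¹ • (b q * c q) := by
  simpa [a, b, c, d] using projAq_rel q SL2Rel.ad
theorem d_mul_a : d q * a q = 1 + q • (b q * c q) := by
  simpa [a, b, c, d] using projAq_rel q SL2Rel.da

variable {q}

theorem b_mul_a (hq : q ≠ 0) : b q * a q = q • (a q * b q) := by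
  rw [a_mul_b, smul_smul, mul_inv_cancel₀ hq, one_smul]

theorem b_mul_c (hq : q ≠ 0) : b q * c q = q • (a q * d q) - q • 1 := by
  rw [a_mul_d, smul_add, smul_smul, mul_inv_cancel₀ hq, one_smul, add_sub_cancel_left]

theorem d_mul_a_sub_one (hq : q ≠ 0) : d q * a q - 1 = (q * q) • (a q * d q - 1) := by
  rw [d_mul_a, b_mul_c hq, smul_sub, smul_sub, smul_smul]
  module

variable (q)

/-- The defining relations are symmetric under exchanging `b` and `c`. -/
def swapBC : Aq q →ₐ[ℂ] Aq q :=
  RingQuot.liftAlgHom ℂ ⟨FreeAlgebra.lift ℂ ![a q, c q, b q, d q], fun x y h => by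
    cases h <;>
      simp [genA, genB, genC, genD, a_mul_b, a_mul_c, d_mul_b, d_mul_c, c_mul_b, a_mul_d, d_mul_a]⟩

theorem swapBC_projAq (x : FreeAlgebra ℂ (Fin 4)) :
    swapBC q (projAq q x) = FreeAlgebra.lift ℂ ![a q, c q, b q, d q] x :=
  RingQuot.liftAlgHom_mkAlgHom_apply ..

theorem swapBC_a : swapBC q (a q) = a q := (swapBC_projAq q genA).trans (by simp [genA])
theorem swapBC_b : swapBC q (b q) = c q := (swapBC_projAq q genB).trans (by simp [genB])
theorem swapBC_c : swapBC q (c q) = b q := (swapBC_projAq q genC).trans (by simp [genC])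
theorem swapBC_d : swapBC q (d q) = d q := (swapBC_projAq q genD).trans (by simp [genD])

theorem swapBC_swapBC (x : Aq q) : swapBC q (swapBC q x) = x := by
  suffices (swapBC q).comp (swapBC q) = AlgHom.id ℂ (Aq q) from AlgHom.congr_fun this x
  refine RingQuot.ringQuot_ext' ℂ _ _ (FreeAlgebra.hom_ext (funext fun i => ?_))
  fin_cases i
  · exact (congrArg _ (swapBC_a q)).trans (swapBC_a q)
  · exact (congrArg _ (swapBC_b q)).trans (swapBC_c q)
  · exact (congrArg _ (swapBC_c q)).trans (swapBC_b q)
  · exact (congrArg _ (swapBC_d q)).trans (swapBC_d q)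

def powSubalgebra (N : ℕ) : Subalgebra ℂ (Aq q) :=
  Algebra.adjoin ℂ {projAq q (genA ^ N), projAq q (genB ^ N), projAq q (genC ^ N),
    projAq q (genD ^ N)}

def monomials (N : ℕ) : Set (Aq q) :=
  {x | ∃ i j k : ℕ, i ≤ N - 1 ∧ j ≤ N - 1 ∧ k ≤ N - 1 ∧
    x = projAq q (genA ^ i * genB ^ j * genD ^ k)} ∪
  {x | ∃ i j k : ℕ, i ≤ N - 1 ∧ j ≤ N - 1 ∧ k ≤ N - 1 ∧
    x = projAq q (genA ^ i * genC ^ j * genD ^ k)}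

def monomialSpan (N : ℕ) : Submodule ℂ (Aq q) := (powSubalgebra q N).leftSpan (monomials q N)

def abd (i j k : ℕ) : Aq q := a q ^ i * b q ^ j * d q ^ k

theorem abd_eq_projAq (i j k : ℕ) : abd q i j k = projAq q (genA ^ i * genB ^ j * genD ^ k) := by
  simp [abd, a, b, d]

theorem swapBC_abd (i j k : ℕ) :
    swapBC q (abd q i j k) = projAq q (genA ^ i * genC ^ j * genD ^ k) := by
  simp only [abd, map_mul, map_pow, swapBC_a, swapBC_b, swapBC_d]
  simp [a, c, d]

variable {q} {N : ℕ}

theorem a_pow_mem_powSubalgebra : a q ^ N ∈ powSubalgebra q N := by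
  rw [a, ← map_pow]; exact Algebra.subset_adjoin (by simp)
theorem b_pow_mem_powSubalgebra : b q ^ N ∈ powSubalgebra q N := by
  rw [b, ← map_pow]; exact Algebra.subset_adjoin (by simp)
theorem d_pow_mem_powSubalgebra : d q ^ N ∈ powSubalgebra q N := by
  rw [d, ← map_pow]; exact Algebra.subset_adjoin (by simp)

theorem mem_monomials {s : Aq q} (hN : 1 ≤ N) : s ∈ monomials q N ↔
    ∃ i j k, i < N ∧ j < N ∧ k < N ∧ (s = abd q i j k ∨ s = swapBC q (abd q i j k)) := by
  simp only [monomials, Set.mem_union, Set.mem_ofPred_eq, ← abd_eq_projAq, ← swapBC_abd,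
    Nat.le_sub_one_iff_lt hN]
  constructor
  · rintro (⟨i, j, k, hi, hj, hk, rfl⟩ | ⟨i, j, k, hi, hj, hk, rfl⟩)
    · exact ⟨i, j, k, hi, hj, hk, .inl rfl⟩
    · exact ⟨i, j, k, hi, hj, hk, .inr rfl⟩
  · rintro ⟨i, j, k, hi, hj, hk, rfl | rfl⟩
    · exact .inl ⟨i, j, k, hi, hj, hk, rfl⟩
    · exact .inr ⟨i, j, k, hi, hj, hk, rfl⟩

theorem swapBC_mem_monomialSpan {y : Aq q} (hy : y ∈ monomialSpan q N) :
    swapBC q y ∈ monomialSpan q N := by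
  refine Subalgebra.map_mem_leftSpan _ ?_ ?_ hy
  · rw [powSubalgebra, AlgHom.map_adjoin]
    refine Algebra.adjoin_mono ?_
    rintro _ ⟨x, hx, rfl⟩
    rcases hx with rfl | rfl | rfl | rfl <;>
      simp [swapBC_projAq, genA, genB, genC, genD, a, b, c, d]
  · rintro _ ⟨s, ⟨i, j, k, hi, hj, hk, rfl⟩ | ⟨i, j, k, hi, hj, hk, rfl⟩, rfl⟩
    · exact .inr ⟨i, j, k, hi, hj, hk, by rw [← abd_eq_projAq, swapBC_abd]⟩
    · exact .inl ⟨i, j, k, hi, hj, hk, by rw [← swapBC_abd, swapBC_swapBC, abd_eq_projAq]⟩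

theorem d_pow_mul_a (hq : q ≠ 0) (k : ℕ) :
    d q ^ k * a q = (q * q) ^ k • (a q * d q ^ k) + (1 - (q * q) ^ k) • d q ^ (k - 1) :=
  pow_mul_eq_of_mul_sub_one (d_mul_a_sub_one hq) k

theorem abd_mul_a (hq : q ≠ 0) (i j k : ℕ) :
    abd q i j k * a q
      = ((q * q) ^ k * q ^ j) • abd q (i + 1) j k + (1 - (q * q) ^ k) • abd q i j (k - 1) := by
  rw [abd, mul_assoc, d_pow_mul_a hq, mul_add, mul_smul_comm, mul_smul_comm, ← mul_assoc,
    mul_assoc (a q ^ i), pow_mul_eq_smul_mul_pow (b_mul_a hq), mul_smul_comm, smul_mul_assoc,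
    smul_smul, ← mul_assoc, ← pow_succ, abd, abd]

theorem abd_mul_b (i j k : ℕ) : abd q i j k * b q = q ^ k • abd q i (j + 1) k := by
  rw [abd, abd, mul_assoc, pow_mul_eq_smul_mul_pow (d_mul_b q), mul_smul_comm, ← mul_assoc,
    mul_assoc (a q ^ i), ← pow_succ]

theorem abd_mul_c (i j k : ℕ) : abd q i j k * c q = q ^ k • (a q ^ i * b q ^ j * c q * d q ^ k) := by
  rw [abd, mul_assoc, pow_mul_eq_smul_mul_pow (d_mul_c q), mul_smul_comm, ← mul_assoc]

theorem abd_mul_d (i j k : ℕ) : abd q i j k * d q = abd q i j (k + 1) := by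
  rw [abd, abd, pow_succ, mul_assoc]

theorem a_pow_mul_b_pow_succ_mul_c_mul_d_pow (hq : q ≠ 0) (i j k : ℕ) :
    a q ^ i * b q ^ (j + 1) * c q * d q ^ k
      = (q * q ^ j) • abd q (i + 1) j (k + 1) - q • abd q i j k := by
  rw [pow_succ, mul_assoc (a q ^ i), mul_assoc (a q ^ i), mul_assoc (b q ^ j), b_mul_c hq]
  simp only [mul_sub, sub_mul, mul_smul_comm, smul_mul_assoc, mul_one]
  rw [← mul_assoc (b q ^ j) (a q), pow_mul_eq_smul_mul_pow (b_mul_a hq), abd, abd,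
    pow_succ (a q) i, pow_succ' (d q) k]
  simp only [smul_mul_assoc, mul_smul_comm, smul_smul, mul_assoc]

theorem adjoin_generators_eq_top :
    Algebra.adjoin ℂ (Set.range (projAq q ∘ FreeAlgebra.ι ℂ)) = ⊤ := by
  rw [Set.range_comp, Algebra.adjoin_image, FreeAlgebra.adjoin_range_ι, Algebra.map_top,
    AlgHom.range_eq_top]
  exact RingQuot.mkAlgHom_surjective ℂ (SL2Rel q)

section Membership

variable {i j k : ℕ}

theorem abd_mem_of_lt (hi : i < N) (hj : j < N) (hk : k < N) : abd q i j k ∈ monomialSpan q N :=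
  Subalgebra.subset_leftSpan
    (Or.inl ⟨i, j, k, by omega, by omega, by omega, abd_eq_projAq q i j k⟩)

theorem abd_mem_of_le_of_lt (hq : q ≠ 0) (hi : i ≤ N) (hj : j ≤ N) (hk : k < N) :
    abd q i j k ∈ monomialSpan q N := by
  have h_lt {i : ℕ} (hi : i < N) : abd q i j k ∈ monomialSpan q N := by
    rcases hj.lt_or_eq with hj | hj
    · exact abd_mem_of_lt hi hj hk
    rw [hj]
    have h : abd q i N k = (q ^ (N * i))⁻¹ • (b q ^ N * abd q i 0 k) := by
      rw [eq_inv_smul_iff₀ (pow_ne_zero _ hq)]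
      simp only [abd, pow_zero, mul_one]
      rw [← mul_assoc, pow_mul_pow_eq_smul_mul_pow (b_mul_a hq), smul_mul_assoc]
    rw [h]
    exact Submodule.smul_mem _ _ (Subalgebra.mul_mem_leftSpan b_pow_mem_powSubalgebra
      (abd_mem_of_lt hi (by omega) hk))
  rcases hi.lt_or_eq with hi | hi
  · exact h_lt hi
  rw [hi]
  have h : abd q N j k = a q ^ N * abd q 0 j k := by simp only [abd, pow_zero, one_mul, mul_assoc]
  rw [h]
  exact Subalgebra.mul_mem_leftSpan a_pow_mem_powSubalgebra (h_lt (by omega))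

theorem mul_mem_monomialSpan_of_abd_mul_mem (hN : 1 ≤ N) {g : Aq q}
    (hg : ∀ i j k, i < N → j < N → k < N → abd q i j k * g ∈ monomialSpan q N)
    (hg' : ∀ i j k, i < N → j < N → k < N → abd q i j k * swapBC q g ∈ monomialSpan q N)
    {y : Aq q} (hy : y ∈ monomialSpan q N) : y * g ∈ monomialSpan q N := by
  refine Subalgebra.mul_mem_leftSpan_of_forall (fun s hs => ?_) hy
  obtain ⟨i, j, k, hi, hj, hk, rfl | rfl⟩ := (mem_monomials hN).mp hs
  · exact hg i j k hi hj hk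
  · rw [← swapBC_swapBC q g, ← map_mul]
    exact swapBC_mem_monomialSpan (hg' i j k hi hj hk)

theorem mul_a_mem (hq : q ≠ 0) (hN : 1 ≤ N) {y : Aq q} (hy : y ∈ monomialSpan q N) :
    y * a q ∈ monomialSpan q N := by
  have h i j k (hi : i < N) (hj : j < N) (hk : k < N) : abd q i j k * a q ∈ monomialSpan q N := by
    rw [abd_mul_a hq]
    exact add_mem (Submodule.smul_mem _ _ (abd_mem_of_le_of_lt hq hi hj.le hk))
      (Submodule.smul_mem _ _ (abd_mem_of_lt hi hj (by omega)))
  exact mul_mem_monomialSpan_of_abd_mul_mem hN h (by simpa only [swapBC_a] using h) hy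

theorem abd_mem (hq : q ≠ 0) (hN : 1 ≤ N) (hi : i ≤ N) (hj : j ≤ N) (hk : k ≤ N) :
    abd q i j k ∈ monomialSpan q N := by
  rcases hk.lt_or_eq with hk | hk
  · exact abd_mem_of_le_of_lt hq hi hj hk
  rw [hk]
  induction i with
  | zero =>
    have h : abd q 0 j N = (q ^ (N * j))⁻¹ • (d q ^ N * abd q 0 j 0) := by
      rw [eq_inv_smul_iff₀ (pow_ne_zero _ hq)]
      simp only [abd, pow_zero, one_mul, mul_one]
      rw [pow_mul_pow_eq_smul_mul_pow (d_mul_b q)]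
    rw [h]
    exact Submodule.smul_mem _ _ (Subalgebra.mul_mem_leftSpan d_pow_mem_powSubalgebra
      (abd_mem_of_le_of_lt hq (Nat.zero_le N) hj hN))
  | succ i ih =>
    -- `abd_mul_a` read backwards expresses `abd (i + 1) j N` through `abd i j N * a`
    have h := eq_sub_of_add_eq (abd_mul_a hq i j N).symm
    rw [← Submodule.smul_mem_iff _ (mul_ne_zero (pow_ne_zero _ (mul_ne_zero hq hq))
      (pow_ne_zero _ hq)), h]
    exact sub_mem (mul_a_mem hq hN (ih (by omega)))
      (Submodule.smul_mem _ _ (abd_mem_of_le_of_lt hq (by omega) hj (by omega)))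

theorem mul_b_mem (hq : q ≠ 0) (hN : 1 ≤ N) {y : Aq q} (hy : y ∈ monomialSpan q N) :
    y * b q ∈ monomialSpan q N := by
  refine mul_mem_monomialSpan_of_abd_mul_mem hN (fun i j k hi hj hk => ?_)
    (fun i j k hi hj hk => ?_) hy
  · rw [abd_mul_b]
    exact Submodule.smul_mem _ _ (abd_mem_of_le_of_lt hq hi.le hj hk)
  · rw [swapBC_b, abd_mul_c]
    refine Submodule.smul_mem _ _ ?_
    rcases j with _ | j
    · have h : a q ^ i * b q ^ 0 * c q * d q ^ k = swapBC q (abd q i 1 k) := by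
        simp [abd, swapBC_a, swapBC_b, swapBC_d]
      rw [h]
      exact swapBC_mem_monomialSpan (abd_mem_of_le_of_lt hq hi.le hN hk)
    · rw [a_pow_mul_b_pow_succ_mul_c_mul_d_pow hq]
      exact sub_mem (Submodule.smul_mem _ _ (abd_mem hq hN hi (by omega) hk))
        (Submodule.smul_mem _ _ (abd_mem_of_lt hi (by omega) hk))

theorem mul_c_mem (hq : q ≠ 0) (hN : 1 ≤ N) {y : Aq q} (hy : y ∈ monomialSpan q N) :
    y * c q ∈ monomialSpan q N := by
  rw [← swapBC_swapBC q (y * c q), map_mul, swapBC_c]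
  exact swapBC_mem_monomialSpan (mul_b_mem hq hN (swapBC_mem_monomialSpan hy))

theorem mul_d_mem (hq : q ≠ 0) (hN : 1 ≤ N) {y : Aq q} (hy : y ∈ monomialSpan q N) :
    y * d q ∈ monomialSpan q N := by
  have h i j k (hi : i < N) (hj : j < N) (hk : k < N) : abd q i j k * d q ∈ monomialSpan q N := by
    rw [abd_mul_d]
    exact abd_mem hq hN hi.le hj.le hk
  exact mul_mem_monomialSpan_of_abd_mul_mem hN h (by simpa only [swapBC_d] using h) hy

end Membership

theorem monomialSpan_eq_top (hq : q ≠ 0) (hN : 1 ≤ N) : monomialSpan q N = ⊤ := by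
  have h1 : (1 : Aq q) ∈ monomials q N :=
    (mem_monomials hN).mpr ⟨0, 0, 0, hN, hN, hN, .inl (by simp [abd])⟩
  refine Subalgebra.leftSpan_eq_top (adjoin_generators_eq_top (q := q))
    (Subalgebra.subset_leftSpan h1) ?_
  rintro _ ⟨g, rfl⟩ s hs
  have hs : s ∈ monomialSpan q N := Subalgebra.subset_leftSpan hs
  fin_cases g
  · exact mul_a_mem hq hN hs
  · exact mul_b_mem hq hN hs
  · exact mul_c_mem hq hN hs
  · exact mul_d_mem hq hN hs

end Aq

/-- For `N ≥ 1`, `A_q` is generated, as a left module over the unital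
`ℂ`-subalgebra generated by `aᴺ, bᴺ, cᴺ, dᴺ`, by the finite set
`{aⁱ bʲ dᵏ : 0 ≤ i,j,k ≤ N-1} ∪ {aⁱ cʲ dᵏ : 0 ≤ i,j,k ≤ N-1}`: every element of `A_q` is a
finite sum of elements `z * s` with `z` in that subalgebra and `s` in that finite set. -/
theorem Aq_finitely_generated_over_N_powers (q : ℂ) (hq : q ≠ 0) (N : ℕ) (hN : 1 ≤ N) :
    ∀ x : Aq q, x ∈ AddSubmonoid.closure
      {y : Aq q |
        ∃ z ∈ Algebra.adjoin ℂ ({projAq q (genA ^ N), projAq q (genB ^ N),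
            projAq q (genC ^ N), projAq q (genD ^ N)} : Set (Aq q)),
        ∃ s ∈ ({x : Aq q | ∃ i j k : ℕ, i ≤ N - 1 ∧ j ≤ N - 1 ∧ k ≤ N - 1 ∧
                  x = projAq q (genA ^ i * genB ^ j * genD ^ k)} ∪
               {x : Aq q | ∃ i j k : ℕ, i ≤ N - 1 ∧ j ≤ N - 1 ∧ k ≤ N - 1 ∧
                  x = projAq q (genA ^ i * genC ^ j * genD ^ k)} : Set (Aq q)),
        y = z * s} :=
  Submodule.eq_top_iff'.mp (Aq.monomialSpan_eq_top hq hN)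

end
end

section
/- An element x ∈ B lies in the center of B if and only if the support of x is contained in Γ⁰. Equivalently, the center of B equals the ℂ-linear span of { Z k : k ∈ Γ⁰ }. -/
/-!
Since `B` is spanned by the `Z l`, an element `x` is central iff it commutes with every `Z l`.
Comparing the coefficient of `Z (k + l)` in `Z l * x` and `x * Z l` shows that this happens iff
`c k l = c l k` for every `k` in the support of `x`. By skew-symmetry this reads
`ω ^ σ k l = ω ^ (-σ k l)`, i.e. `N ∣ 2 σ k l`, and as `N` is odd, `N ∣ σ k l`.
-/

theorem IsPrimitiveRoot.zpow_eq_zpow_neg_iff_dvd {K : Type*} [Field K] {ω : K} {N : ℕ}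
    (hω : IsPrimitiveRoot ω N) (hN : Odd N) (a : ℤ) :
    ω ^ a = ω ^ (-a) ↔ (N : ℤ) ∣ a := by
  have hω0 : ω ≠ 0 := hω.ne_zero hN.pos.ne'
  have hcop : IsCoprime (N : ℤ) 2 := Int.isCoprime_two_right.mpr hN.natCast
  calc ω ^ a = ω ^ (-a) ↔ ω ^ (2 * a) = 1 := by
        rw [two_mul, zpow_add₀ hω0, zpow_neg, mul_eq_one_iff_eq_inv₀ (zpow_ne_zero _ hω0)]
    _ ↔ (N : ℤ) ∣ 2 * a := hω.zpow_eq_one_iff_dvd _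
    _ ↔ (N : ℤ) ∣ a := ⟨hcop.dvd_of_dvd_mul_left, fun h => h.mul_left 2⟩

theorem Module.Basis.mem_center_iff_forall_commute {R ι B : Type*} [CommSemiring R] [Semiring B]
    [Algebra R B] (Z : Module.Basis ι R B) (x : B) :
    x ∈ Set.center B ↔ ∀ i, Commute (Z i) x := by
  rw [Semigroup.mem_center_iff]
  refine ⟨fun h i => h (Z i), fun h y => ?_⟩
  have : LinearMap.mulRight R x = LinearMap.mulLeft R x := Z.ext h
  exact LinearMap.congr_fun this y

namespace Module.Basis

variable {R Γ B : Type*} [CommRing R] [AddCommGroup Γ] [Ring B] [Algebra R B]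
  (Z : Module.Basis Γ R B) {c : Γ → Γ → R}

theorem repr_mul_basis_apply (hmul : ∀ k l, Z k * Z l = c k l • Z (k + l)) (x : B) (l m : Γ) :
    Z.repr (x * Z l) m = c (m - l) l * Z.repr x (m - l) := by
  have h : (Finsupp.lapply m ∘ₗ Z.repr.toLinearMap ∘ₗ LinearMap.mulRight R (Z l))
      = c (m - l) l • (Finsupp.lapply (m - l) ∘ₗ Z.repr.toLinearMap) := by
    refine Z.ext fun k => ?_
    by_cases hk : k = m - l
    · subst hk; simp [hmul]
    · have : k + l ≠ m := fun h => hk (eq_sub_of_add_eq h)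
      simp [hmul, hk, this]
  simpa using LinearMap.congr_fun h x

theorem repr_basis_mul_apply (hmul : ∀ k l, Z k * Z l = c k l • Z (k + l)) (x : B) (l m : Γ) :
    Z.repr (Z l * x) m = c l (m - l) * Z.repr x (m - l) := by
  have h : (Finsupp.lapply m ∘ₗ Z.repr.toLinearMap ∘ₗ LinearMap.mulLeft R (Z l))
      = c l (m - l) • (Finsupp.lapply (m - l) ∘ₗ Z.repr.toLinearMap) := by
    refine Z.ext fun k => ?_
    by_cases hk : k = m - l
    · subst hk; simp [hmul]
    · have : l + k ≠ m := fun h => hk (eq_sub_of_add_eq' h)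
      simp [hmul, hk, this]
  simpa using LinearMap.congr_fun h x

variable [IsDomain R]

theorem commute_basis_iff (hmul : ∀ k l, Z k * Z l = c k l • Z (k + l)) (x : B) (l : Γ) :
    Commute (Z l) x ↔ ∀ k ∈ (Z.repr x).support, c k l = c l k := by
  calc Commute (Z l) x ↔ ∀ m, Z.repr (Z l * x) m = Z.repr (x * Z l) m := Z.ext_elem_iff
    _ ↔ ∀ k, c l k * Z.repr x k = c k l * Z.repr x k := by
      simp only [Z.repr_basis_mul_apply hmul, Z.repr_mul_basis_apply hmul]
      exact ⟨fun h k => by simpa using h (k + l), fun h m => h (m - l)⟩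
    _ ↔ ∀ k ∈ (Z.repr x).support, c k l = c l k := by
      refine forall_congr' fun k => ?_
      rw [Finsupp.mem_support_iff, mul_eq_mul_right_iff, eq_comm, or_iff_not_imp_right]

theorem mem_center_iff_of_basis_mul (hmul : ∀ k l, Z k * Z l = c k l • Z (k + l)) (x : B) :
    x ∈ Set.center B ↔ ∀ k ∈ (Z.repr x).support, ∀ l, c k l = c l k := by
  simp only [Z.mem_center_iff_forall_commute, Z.commute_basis_iff hmul]
  exact ⟨fun h k hk l => h l k hk, fun h l k hk => h k hk l⟩

end Module.Basis

theorem center_of_quantum_torus_general {Γ : Type*} [AddCommGroup Γ]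
    {B : Type*} [Ring B] [Algebra ℂ B] (Z : Module.Basis Γ ℂ B)
    (N : ℕ) (hNodd : Odd N)
    (ω : ℂ) (hω : IsPrimitiveRoot ω N)
    (σ : Γ → Γ → ℤ)
    (hσ_skew : ∀ k l, σ k l = - σ l k)
    (c : Γ → Γ → ℂ)
    (hcω : ∀ k l, c k l = ω ^ (σ k l))
    (hmul : ∀ k l, Z k * Z l = c k l • Z (k + l)) :
    (∀ x : B, x ∈ Set.center B ↔
        ∀ k ∈ (Z.repr x).support, ∀ l : Γ, (N : ℤ) ∣ σ k l) ∧
    Set.center B = ↑(Submodule.span ℂ (⇑Z '' {k : Γ | ∀ l : Γ, (N : ℤ) ∣ σ k l})) := by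
  have hc_comm : ∀ k l, c k l = c l k ↔ (N : ℤ) ∣ σ k l := fun k l => by
    rw [hcω, hcω, hσ_skew l k]
    exact hω.zpow_eq_zpow_neg_iff_dvd hNodd _
  have hcenter : ∀ x : B, x ∈ Set.center B ↔
      ∀ k ∈ (Z.repr x).support, ∀ l : Γ, (N : ℤ) ∣ σ k l := fun x => by
    simp only [Z.mem_center_iff_of_basis_mul hmul, hc_comm]
  refine ⟨hcenter, Set.ext fun x => ?_⟩
  rw [SetLike.mem_coe, Z.mem_span_image, hcenter]
  rfl

/-- Let `Γ` be an additive commutative group and `B` an associative unital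
`ℂ`-algebra, free as a `ℂ`-module with basis `(Z k)_{k ∈ Γ}`, whose multiplication satisfies
`Z k * Z l = c k l • Z (k + l)`, where `c k l = ω ^ (σ k l)` for a biadditive skew-symmetric
form `σ : Γ → Γ → ℤ` and a primitive `N`-th root of unity `ω` with `N > 1` odd.  Then an
element `x ∈ B` is central iff the support of `x` is contained in
`Γ⁰ = {k | ∀ l, N ∣ σ k l}`; equivalently, the center of `B` is the `ℂ`-linear span of
`{Z k : k ∈ Γ⁰}`. -/
theorem center_of_quantum_torus {Γ : Type*} [AddCommGroup Γ]
    {B : Type*} [Ring B] [Algebra ℂ B] (Z : Module.Basis Γ ℂ B)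
    (N : ℕ) (hN : 1 < N) (hNodd : Odd N)
    (ω : ℂ) (hω : IsPrimitiveRoot ω N)
    (σ : Γ → Γ → ℤ)
    (hσ_add_left : ∀ k l m, σ (k + l) m = σ k m + σ l m)
    (hσ_add_right : ∀ k l m, σ k (l + m) = σ k l + σ k m)
    (hσ_skew : ∀ k l, σ k l = - σ l k)
    (c : Γ → Γ → ℂ) (hc : ∀ k l, c k l ≠ 0)
    (hcω : ∀ k l, c k l = ω ^ (σ k l))
    (hmul : ∀ k l, Z k * Z l = c k l • Z (k + l)) :
    (∀ x : B, x ∈ Set.center B ↔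
        ∀ k ∈ (Z.repr x).support, ∀ l : Γ, (N : ℤ) ∣ σ k l) ∧
    Set.center B = ↑(Submodule.span ℂ (⇑Z '' {k : Γ | ∀ l : Γ, (N : ℤ) ∣ σ k l})) :=
  center_of_quantum_torus_general Z N hNodd ω hω σ hσ_skew c hcω hmul
end

section
/- Let S ⊆ Γ be a set of coset representatives of Γ⁰ in Γ, i.e. the quotient map Γ → Γ/Γ⁰ restricts to a bijection from S onto Γ/Γ⁰. Then the family (Z k)_{k ∈ S} is a basis of B as a module over the center of B: these elements span B over the center, and whenever (z_k)_{k ∈ S} are central elements, almost all zero, with ∑_{k ∈ S} z_k * Z k = 0, then z_k = 0 for every k ∈ S. In particular, if Γ⁰ has finite index R in Γ, then B is a free module of rank R over its center. -/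
/-!
Write `x = ∑ xₖ Zₖ`. Comparing coefficients in `Z l * x = x * Z l` shows that a central `x` is
supported on indices `k` with `c k l = c l k` for all `l`, and conversely every such `Z k` is
central; for `c = ω ^ σ` with `N` odd these are exactly the indices in `Γ⁰`, since
`ω ^ n = ω ^ (-n)` means `N ∣ 2n`. Hence the central elements are the combinations of the
`Z k`, `k ∈ Γ⁰`, and the summands `z * Z s` with `z` central and `s ∈ S` live on the pairwise
disjoint cosets `Γ⁰ + s`, which gives both spanning and independence.
-/

open Module

section TwistedBasis

variable {K B Γ : Type*} [Field K] [Ring B] [Algebra K B] [AddCommGroup Γ]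
  {Z : Basis Γ K B} {c : Γ → Γ → K}

theorem repr_mul_basis (hmul : ∀ k l, Z k * Z l = c k l • Z (k + l)) (x : B) (l j : Γ) :
    Z.repr (x * Z l) j = c (j - l) l * Z.repr x (j - l) := by
  have h : (Finsupp.lapply j ∘ₗ Z.repr.toLinearMap ∘ₗ LinearMap.mulRight K (Z l)) =
      c (j - l) l • (Finsupp.lapply (j - l) ∘ₗ Z.repr.toLinearMap) := by
    classical
    refine Z.ext fun m => ?_
    simp only [LinearMap.comp_apply, LinearMap.mulRight_apply, LinearMap.smul_apply,
      Finsupp.lapply_apply, LinearEquiv.coe_coe, hmul, map_smul, Z.repr_self,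
      Finsupp.single_apply, eq_sub_iff_add_eq, smul_eq_mul]
    split_ifs with hj
    · rw [← hj, add_sub_cancel_right]
    · rw [mul_zero, mul_zero]
  simpa using DFunLike.congr_fun h x

theorem repr_basis_mul (hmul : ∀ k l, Z k * Z l = c k l • Z (k + l)) (x : B) (l j : Γ) :
    Z.repr (Z l * x) j = c l (j - l) * Z.repr x (j - l) := by
  have h : (Finsupp.lapply j ∘ₗ Z.repr.toLinearMap ∘ₗ LinearMap.mulLeft K (Z l)) =
      c l (j - l) • (Finsupp.lapply (j - l) ∘ₗ Z.repr.toLinearMap) := by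
    classical
    refine Z.ext fun m => ?_
    simp only [LinearMap.comp_apply, LinearMap.mulLeft_apply, LinearMap.smul_apply,
      Finsupp.lapply_apply, LinearEquiv.coe_coe, hmul, map_smul, Z.repr_self,
      Finsupp.single_apply, eq_sub_iff_add_eq, add_comm m l, smul_eq_mul]
    split_ifs with hj
    · rw [← hj, add_sub_cancel_left]
    · rw [mul_zero, mul_zero]
  simpa using DFunLike.congr_fun h x

theorem basis_mem_center (hmul : ∀ k l, Z k * Z l = c k l • Z (k + l)) {m : Γ}
    (hm : ∀ l, c m l = c l m) : Z m ∈ Set.center B :=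
  Semigroup.mem_center_iff.2 fun x => Z.repr.injective <| Finsupp.ext fun j => by
    rw [repr_mul_basis hmul, repr_basis_mul hmul, hm]

theorem symm_of_repr_ne_zero_of_mem_center (hmul : ∀ k l, Z k * Z l = c k l • Z (k + l))
    {z : B} (hz : z ∈ Set.center B) {m : Γ} (hm : Z.repr z m ≠ 0) (l : Γ) : c m l = c l m := by
  have h := congrArg (fun x => Z.repr x (m + l)) (Semigroup.mem_center_iff.1 hz (Z l))
  simp only [repr_mul_basis hmul, repr_basis_mul hmul, add_sub_cancel_right] at h
  exact (mul_right_cancel₀ hm h).symm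

variable {G : AddSubgroup Γ} {S : Set Γ}

theorem sub_mem_of_repr_center_mul_basis_ne_zero (hmul : ∀ k l, Z k * Z l = c k l • Z (k + l))
    (hG : ∀ m, (∀ l, c m l = c l m) → m ∈ G) {z : B} (hz : z ∈ Set.center B) {s j : Γ}
    (h : Z.repr (z * Z s) j ≠ 0) : j - s ∈ G := by
  rw [repr_mul_basis hmul] at h
  exact hG _ (symm_of_repr_ne_zero_of_mem_center hmul hz (right_ne_zero_of_mul h))

theorem closure_center_mul_basis_eq_top (hmul : ∀ k l, Z k * Z l = c k l • Z (k + l))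
    (hc : ∀ k l, c k l ≠ 0) (hG : ∀ m ∈ G, ∀ l, c m l = c l m) (hS : ∀ k, ∃ s ∈ S, k - s ∈ G) :
    AddSubmonoid.closure {y : B | ∃ z ∈ Set.center B, ∃ s ∈ S, y = z * Z s} = ⊤ := by
  refine eq_top_iff.2 fun x _ => ?_
  rw [← Z.linearCombination_repr x, Finsupp.linearCombination_apply]
  refine AddSubmonoidClass.finsuppSum_mem _ _ _ fun k _ => AddSubmonoid.subset_closure ?_
  obtain ⟨s, hs, hks⟩ := hS k
  refine ⟨(Z.repr x k / c (k - s) s) • Z (k - s),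
    (Subalgebra.center K B).smul_mem (basis_mem_center hmul (hG _ hks)) _, s, hs, ?_⟩
  rw [smul_mul_assoc, hmul, smul_smul, sub_add_cancel, div_mul_cancel₀ _ (hc _ _)]

theorem eq_zero_of_sum_center_mul_basis_eq_zero (hmul : ∀ k l, Z k * Z l = c k l • Z (k + l))
    (hc : ∀ k l, c k l ≠ 0) (hG : ∀ m, (∀ l, c m l = c l m) → m ∈ G)
    (hS : ∀ s ∈ S, ∀ t ∈ S, s - t ∈ G → s = t) {T : Finset Γ} (hT : ↑T ⊆ S) {z : Γ → B}
    (hz : ∀ k ∈ T, z k ∈ Set.center B) (hsum : ∑ k ∈ T, z k * Z k = 0) {k₀ : Γ} (hk₀ : k₀ ∈ T) :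
    z k₀ = 0 := by
  rw [← Z.repr.map_eq_zero_iff]
  ext m
  by_contra hm
  have hm₀ : Z.repr (z k₀ * Z k₀) (m + k₀) ≠ 0 := by
    rw [repr_mul_basis hmul, add_sub_cancel_right]
    exact mul_ne_zero (hc _ _) hm
  have hother : ∀ k ∈ T, k ≠ k₀ → Z.repr (z k * Z k) (m + k₀) = 0 := by
    intro k hk hne
    by_contra h
    refine hne (hS _ (hT hk) _ (hT hk₀) ?_)
    convert G.sub_mem (sub_mem_of_repr_center_mul_basis_ne_zero hmul hG (hz k₀ hk₀) hm₀)
      (sub_mem_of_repr_center_mul_basis_ne_zero hmul hG (hz k hk) h) using 1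
    abel
  apply hm₀
  rw [← Finset.sum_eq_single_of_mem k₀ hk₀ hother, ← Finsupp.finsetSum_apply, ← map_sum, hsum,
    map_zero, Finsupp.zero_apply]

end TwistedBasis

theorem IsPrimitiveRoot.zpow_eq_zpow_neg_iff {K : Type*} [CommGroupWithZero K] {ω : K} {N : ℕ}
    (hω : IsPrimitiveRoot ω N) (hN : N ≠ 0) (hodd : Odd N) (n : ℤ) :
    ω ^ n = ω ^ (-n) ↔ (N : ℤ) ∣ n := by
  have hω₀ : ω ≠ 0 := hω.ne_zero hN
  have hcop : IsCoprime (N : ℤ) 2 := Nat.isCoprime_iff_coprime.2 (Nat.coprime_two_right.2 hodd)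
  rw [← mul_left_inj' (zpow_ne_zero n hω₀), ← zpow_add₀ hω₀, ← zpow_add₀ hω₀, neg_add_cancel,
    zpow_zero, ← two_mul, hω.zpow_eq_one_iff_dvd]
  exact ⟨hcop.dvd_of_dvd_mul_left, fun h => h.mul_left 2⟩

def modRadical {Γ : Type*} [AddCommGroup Γ] (σ : Γ → Γ → ℤ)
    (hσ : ∀ k l m, σ (k + l) m = σ k m + σ l m) (N : ℤ) : AddSubgroup Γ where
  carrier := {k | ∀ l, N ∣ σ k l}
  add_mem' {k k'} hk hk' l := by rw [hσ]; exact dvd_add (hk l) (hk' l)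
  zero_mem' l := by
    have h := hσ 0 0 l
    rw [add_zero] at h
    rw [show σ 0 l = 0 by omega]
    exact dvd_zero N
  neg_mem' {k} hk l := by
    have h₀ := hσ 0 0 l
    have h := hσ k (-k) l
    rw [add_zero] at h₀
    rw [add_neg_cancel] at h
    rw [show σ (-k) l = -σ k l by omega]
    exact (hk l).neg_right

theorem quantum_torus_basis_over_center_general {Γ : Type*} [AddCommGroup Γ]
    {B : Type*} [Ring B] [Algebra ℂ B] (Z : Module.Basis Γ ℂ B)
    (N : ℕ) (hN : 1 < N) (hNodd : Odd N)
    (ω : ℂ) (hω : IsPrimitiveRoot ω N)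
    (σ : Γ → Γ → ℤ)
    (hσ_add_left : ∀ k l m, σ (k + l) m = σ k m + σ l m)
    (hσ_skew : ∀ k l, σ k l = - σ l k)
    (c : Γ → Γ → ℂ) (hc : ∀ k l, c k l ≠ 0)
    (hcω : ∀ k l, c k l = ω ^ (σ k l))
    (hmul : ∀ k l, Z k * Z l = c k l • Z (k + l))
    (S : Set Γ)
    (hS : ∀ k : Γ, ∃! s, s ∈ S ∧ ∀ l : Γ, (N : ℤ) ∣ σ (k - s) l) :
    (AddSubmonoid.closure
        {y : B | ∃ z ∈ Set.center B, ∃ s ∈ S, y = z * Z s} = ⊤) ∧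
    (∀ T : Finset Γ, ↑T ⊆ S → ∀ z : Γ → B, (∀ k ∈ T, z k ∈ Set.center B) →
        ∑ k ∈ T, z k * Z k = 0 → ∀ k ∈ T, z k = 0) := by
  set Γ₀ := modRadical σ hσ_add_left N
  have hΓ₀ : ∀ m, m ∈ Γ₀ ↔ ∀ l, c m l = c l m := fun m => forall_congr' fun l => by
    rw [hcω, hcω, hσ_skew l m, hω.zpow_eq_zpow_neg_iff (by omega) hNodd]
  refine ⟨closure_center_mul_basis_eq_top hmul hc (fun m => (hΓ₀ m).1) fun k => ?_,
    fun T hT z hz hsum k hk => eq_zero_of_sum_center_mul_basis_eq_zero hmul hc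
      (fun m => (hΓ₀ m).2) ?_ hT hz hsum hk⟩
  · obtain ⟨s, ⟨hs, hks⟩, -⟩ := hS k
    exact ⟨s, hs, hks⟩
  · intro s hs t ht hst
    obtain ⟨u, -, hu⟩ := hS s
    have hss : s - s ∈ Γ₀ := by rw [sub_self]; exact Γ₀.zero_mem
    exact (hu s ⟨hs, hss⟩).trans (hu t ⟨ht, hst⟩).symm

/-- With `B` a quantum torus over `ℂ` with basis `(Z k)_{k ∈ Γ}`,
`c k l = ω ^ (σ k l)`, `ω` a primitive `N`-th root of unity (`N > 1` odd), and
`Γ⁰ = {k | ∀ l, N ∣ σ k l}`, let `S ⊆ Γ` be a set of coset representatives of `Γ⁰` in `Γ`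
(each `k ∈ Γ` differs from a unique `s ∈ S` by an element of `Γ⁰`).  Then the family
`(Z s)_{s ∈ S}` is a basis of `B` as a module over the center of `B`: every element of `B` is
a finite sum of elements `z * Z s` with `z` central and `s ∈ S`, and any finitely supported
central relation `∑ z_k * Z k = 0` over `S` has all coefficients zero. -/
theorem quantum_torus_basis_over_center {Γ : Type*} [AddCommGroup Γ]
    {B : Type*} [Ring B] [Algebra ℂ B] (Z : Module.Basis Γ ℂ B)
    (N : ℕ) (hN : 1 < N) (hNodd : Odd N)
    (ω : ℂ) (hω : IsPrimitiveRoot ω N)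
    (σ : Γ → Γ → ℤ)
    (hσ_add_left : ∀ k l m, σ (k + l) m = σ k m + σ l m)
    (hσ_add_right : ∀ k l m, σ k (l + m) = σ k l + σ k m)
    (hσ_skew : ∀ k l, σ k l = - σ l k)
    (c : Γ → Γ → ℂ) (hc : ∀ k l, c k l ≠ 0)
    (hcω : ∀ k l, c k l = ω ^ (σ k l))
    (hmul : ∀ k l, Z k * Z l = c k l • Z (k + l))
    (S : Set Γ)
    (hS : ∀ k : Γ, ∃! s, s ∈ S ∧ ∀ l : Γ, (N : ℤ) ∣ σ (k - s) l) :
    (AddSubmonoid.closure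
        {y : B | ∃ z ∈ Set.center B, ∃ s ∈ S, y = z * Z s} = ⊤) ∧
    (∀ T : Finset Γ, ↑T ⊆ S → ∀ z : Γ → B, (∀ k ∈ T, z k ∈ Set.center B) →
        ∑ k ∈ T, z k * Z k = 0 → ∀ k ∈ T, z k = 0) :=
  quantum_torus_basis_over_center_general Z N hN hNodd ω hω σ hσ_add_left hσ_skew c hc hcω hmul S hS
end

section
/- Let A ⊆ B be a unital ℂ-subalgebra such that the subgroup of Γ generated by the set { v(a) : a ∈ A, a ≠ 0 } is all of Γ. If x ∈ A is nonzero and commutes with every element of A, then v(x) ∈ Γ⁰. -/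
/-- The valuation (leading exponent) of an element of an algebra `B` that is free as a
`ℂ`-module with basis indexed by a linearly ordered group `Γ`: the maximum of the support of
the basis expansion, with value `⊥` exactly on `x = 0`. -/
noncomputable def val {Γ B : Type*} [AddCommGroup Γ] [LinearOrder Γ] [IsOrderedAddMonoid Γ] [Ring B] [Algebra ℂ B]
    (Z : Module.Basis Γ ℂ B) (x : B) : WithBot Γ :=
  (Z.repr x).support.max

/-!
If `x` commutes with `a`, comparing the leading coefficients of `x * a` and `a * x` gives
`c (v x) (v a) = c (v a) (v x)`, i.e. `ω ^ (2 σ (v x) (v a)) = 1`; as `N` is odd, `N` divides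
`σ (v x) (v a)`. So `{l | N ∣ σ (v x) l}` is a subgroup containing every `v a` with `a ∈ A`,
hence all of `Γ`.
-/

theorem IsPrimitiveRoot.dvd_of_zpow_eq_zpow_neg {G₀ : Type*} [CommGroupWithZero G₀] {ζ : G₀}
    {N : ℕ} (hζ : IsPrimitiveRoot ζ N) (hN : Odd N) {a : ℤ} (h : ζ ^ a = ζ ^ (-a)) :
    (N : ℤ) ∣ a := by
  have hζ0 : ζ ≠ 0 := hζ.ne_zero hN.pos.ne'
  have hsq : ζ ^ (2 * a) = 1 := by
    rw [two_mul, zpow_add₀ hζ0]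
    nth_rw 1 [h]
    rw [← zpow_add₀ hζ0, neg_add_cancel, zpow_zero]
  exact (Int.isCoprime_two_right.mpr hN.natCast).dvd_of_dvd_mul_left
    ((hζ.zpow_eq_one_iff_dvd _).mp hsq)

section LeadingTerm

variable {Γ R B : Type*} [AddCommMonoid Γ] [LinearOrder Γ] [IsOrderedCancelAddMonoid Γ]
  [CommSemiring R] [Semiring B] [Algebra R B] (Z : Module.Basis Γ R B) {c : Γ → Γ → R}

theorem Module.Basis.repr_mul_add_of_support_le (hmul : ∀ k l, Z k * Z l = c k l • Z (k + l))
    {u v : B} {g h : Γ} (hu : ∀ k ∈ (Z.repr u).support, k ≤ g)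
    (hv : ∀ l ∈ (Z.repr v).support, l ≤ h) :
    Z.repr (u * v) (g + h) = Z.repr u g * Z.repr v h * c g h := by
  conv_lhs => rw [← Z.linearCombination_repr u, ← Z.linearCombination_repr v]
  rw [Finsupp.linearCombination_apply, Finsupp.linearCombination_apply, Finsupp.sum,
    Finsupp.sum, Finset.sum_mul]
  simp only [Finset.mul_sum, smul_mul_smul_comm, hmul, smul_smul, map_sum, map_smul, Z.repr_self, Finsupp.smul_single,
    smul_eq_mul, mul_one, Finset.sum_apply', Finsupp.single_apply]
  -- only the pair `(g, h)` of leading exponents can contribute to the coefficient at `g + h`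
  rw [Finset.sum_eq_single g]
  · rw [Finset.sum_eq_single h]
    · simp
    · intro l _ hlh
      simp [hlh]
    · intro hh
      simp [Finsupp.notMem_support_iff.mp hh]
  · intro k hk hkg
    refine Finset.sum_eq_zero fun l hl => ?_
    have hlt : k + l < g + h := add_lt_add_of_lt_of_le ((hu k hk).lt_of_ne hkg) (hv l hl)
    simp [hlt.ne]
  · intro hg
    simp [Finsupp.notMem_support_iff.mp hg]

end LeadingTerm

section Val

variable {Γ B : Type*} [AddCommGroup Γ] [LinearOrder Γ] [IsOrderedAddMonoid Γ] [Ring B]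
  [Algebra ℂ B] (Z : Module.Basis Γ ℂ B) {x : B} {g : Γ}

theorem exists_val_eq_coe (hx : x ≠ 0) : ∃ g : Γ, val Z x = g :=
  Finset.max_of_nonempty (Finsupp.support_nonempty_iff.mpr (by simpa using hx))

theorem le_of_val_eq_coe (hx : val Z x = g) {k : Γ} (hk : k ∈ (Z.repr x).support) : k ≤ g :=
  Finset.le_max_of_eq hk hx

theorem repr_ne_zero_of_val_eq_coe (hx : val Z x = g) : Z.repr x g ≠ 0 :=
  Finsupp.mem_support_iff.mp (Finset.mem_of_max hx)

theorem repr_mul_of_val_eq_coe {c : Γ → Γ → ℂ} (hmul : ∀ k l, Z k * Z l = c k l • Z (k + l))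
    {u v : B} {g h : Γ} (hu : val Z u = g) (hv : val Z v = h) :
    Z.repr (u * v) (g + h) = Z.repr u g * Z.repr v h * c g h :=
  Z.repr_mul_add_of_support_le hmul (fun _ => le_of_val_eq_coe Z hu)
    (fun _ => le_of_val_eq_coe Z hv)

theorem structConst_symm_of_commute {c : Γ → Γ → ℂ}
    (hmul : ∀ k l, Z k * Z l = c k l • Z (k + l)) {u v : B} {g h : Γ} (hu : val Z u = g)
    (hv : val Z v = h) (huv : Commute u v) : c g h = c h g := by
  have hlead := repr_mul_of_val_eq_coe Z hmul hu hv
  rw [huv.eq, add_comm, repr_mul_of_val_eq_coe Z hmul hv hu, mul_comm (Z.repr v h)] at hlead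
  exact (mul_left_cancel₀ (mul_ne_zero (repr_ne_zero_of_val_eq_coe Z hu)
    (repr_ne_zero_of_val_eq_coe Z hv)) hlead).symm

end Val

theorem val_of_relatively_central_mem_kernel_general {Γ : Type*} [AddCommGroup Γ] [LinearOrder Γ] [IsOrderedAddMonoid Γ]
    {B : Type*} [Ring B] [Algebra ℂ B] (Z : Module.Basis Γ ℂ B)
    (N : ℕ) (hNodd : Odd N)
    (ω : ℂ) (hω : IsPrimitiveRoot ω N)
    (σ : Γ → Γ → ℤ)
    (hσ_add_right : ∀ k l m, σ k (l + m) = σ k l + σ k m)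
    (hσ_skew : ∀ k l, σ k l = - σ l k)
    (c : Γ → Γ → ℂ)
    (hcω : ∀ k l, c k l = ω ^ (σ k l))
    (hmul : ∀ k l, Z k * Z l = c k l • Z (k + l))
    (A : Subalgebra ℂ B)
    (hgen : AddSubgroup.closure
        {g : Γ | ∃ a ∈ A, a ≠ 0 ∧ val Z a = (g : WithBot Γ)} = ⊤)
    (x : B) (hx : x ≠ 0)
    (hcomm : ∀ y ∈ A, x * y = y * x) :
    ∃ g : Γ, val Z x = (g : WithBot Γ) ∧ ∀ l : Γ, (N : ℤ) ∣ σ g l := by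
  obtain ⟨g, hg⟩ := exists_val_eq_coe Z hx
  refine ⟨g, hg, fun l => ?_⟩
  let σg : Γ →+ ℤ := AddMonoidHom.mk' (σ g) (hσ_add_right g)
  have hle : AddSubgroup.closure {g : Γ | ∃ a ∈ A, a ≠ 0 ∧ val Z a = (g : WithBot Γ)} ≤
      (AddSubgroup.zmultiples (N : ℤ)).comap σg := by
    rw [AddSubgroup.closure_le]
    rintro h ⟨a, haA, -, ha⟩
    have hsymm := structConst_symm_of_commute Z hmul hg ha (hcomm a haA)
    rw [hcω, hcω, hσ_skew h g] at hsymm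
    exact Int.mem_zmultiples_iff.mpr (hω.dvd_of_zpow_eq_zpow_neg hNodd hsymm)
  exact Int.mem_zmultiples_iff.mp (hle (hgen ▸ AddSubgroup.mem_top l))

/-- With `B` a quantum torus over `ℂ` with basis `(Z k)_{k ∈ Γ}` indexed by a
linearly ordered additive group `Γ`, `c k l = ω ^ (σ k l)`, `ω` a primitive `N`-th root of
unity (`N > 1` odd), let `A ⊆ B` be a unital `ℂ`-subalgebra such that the subgroup of `Γ`
generated by the valuations `v a` of nonzero elements `a ∈ A` is all of `Γ`.  If `x ∈ A` is
nonzero and commutes with every element of `A`, then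
`v x ∈ Γ⁰ = {k | ∀ l, N ∣ σ k l}`. -/
theorem val_of_relatively_central_mem_kernel {Γ : Type*} [AddCommGroup Γ] [LinearOrder Γ] [IsOrderedAddMonoid Γ]
    {B : Type*} [Ring B] [Algebra ℂ B] (Z : Module.Basis Γ ℂ B)
    (N : ℕ) (hN : 1 < N) (hNodd : Odd N)
    (ω : ℂ) (hω : IsPrimitiveRoot ω N)
    (σ : Γ → Γ → ℤ)
    (hσ_add_left : ∀ k l m, σ (k + l) m = σ k m + σ l m)
    (hσ_add_right : ∀ k l m, σ k (l + m) = σ k l + σ k m)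
    (hσ_skew : ∀ k l, σ k l = - σ l k)
    (c : Γ → Γ → ℂ) (hc : ∀ k l, c k l ≠ 0)
    (hcω : ∀ k l, c k l = ω ^ (σ k l))
    (hmul : ∀ k l, Z k * Z l = c k l • Z (k + l))
    (A : Subalgebra ℂ B)
    (hgen : AddSubgroup.closure
        {g : Γ | ∃ a ∈ A, a ≠ 0 ∧ val Z a = (g : WithBot Γ)} = ⊤)
    (x : B) (hxA : x ∈ A) (hx : x ≠ 0)
    (hcomm : ∀ y ∈ A, x * y = y * x) :
    ∃ g : Γ, val Z x = (g : WithBot Γ) ∧ ∀ l : Γ, (N : ℤ) ∣ σ g l :=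
  val_of_relatively_central_mem_kernel_general Z N hNodd ω hω σ hσ_add_right hσ_skew c hcω hmul A
    hgen x hx hcomm
end
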